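/- arXiv:1003.5072 — 2 statements merged into one kernel-verified Lean document; each statement's English description precedes it below -/
import Mathlib

section
/- Let n ≥ 1 and t > 0. Then for every measurable function f : ℝ^n → ℝ with ∫ |f| V_t dγ < ∞ one has ‖N_t f‖_{L²(γ)} ≤ ∫_{ℝ^n} |f(y)| V_t(y) dγ(y), where V_t(y) = (1 − e^{−4t})^{−n/4} · exp( |y|²/(2(1 + e^{2t})) ). -/
open MeasureTheory Real

noncomputable def gaussianMeasure (n : ℕ) : Measure (EuclideanSpace ℝ (Fin n)) :=
  volume.withDensity fun x => ENNReal.ofReal ((2 * π) ^ (-(n : ℝ) / 2) * Real.exp (-‖x‖ ^ 2 / 2))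

/-- Ornstein-Uhlenbeck semigroup via the Mehler formula. -/
noncomputable def OU (n : ℕ) (t : ℝ) (f : EuclideanSpace ℝ (Fin n) → ℝ)
    (x : EuclideanSpace ℝ (Fin n)) : ℝ :=
  ∫ y, f (Real.exp (-t) • x + Real.sqrt (1 - Real.exp (-2 * t)) • y) ∂(gaussianMeasure n)

/-- The weight `V_t(y) = (1-e^{-4t})^{-n/4} exp(|y|²/(2(1+e^{2t})))`. -/
noncomputable def Vweight (n : ℕ) (t : ℝ) (y : EuclideanSpace ℝ (Fin n)) : ℝ :=
  (1 - Real.exp (-4 * t)) ^ (-(n : ℝ) / 4) *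
    Real.exp (‖y‖ ^ 2 / (2 * (1 + Real.exp (2 * t))))

open scoped ENNReal RealInnerProductSpace

/-!
By the Mehler formula, `N_t f(x) = ∫ f(z) p_t(x, z) dz`, where `p_t(x, ·)` is the density of the
normal law with mean `e^{-t} x` and covariance `(1 - e^{-2t}) I`. Minkowski's integral inequality
bounds `‖N_t f‖_{L²(γ)}` by `∫ |f(z)| ‖p_t(·, z)‖_{L²(γ)} dz`, and a Gaussian integral with a
linear term in the exponent evaluates `‖p_t(·, z)‖_{L²(γ)}` to `V_t(z) φ(z)`, where `φ` is the
density of `γ`.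
-/

section Minkowski

variable {α β : Type*} [MeasurableSpace α] [MeasurableSpace β] {μ : Measure α}
  {ν : Measure β}

theorem eLpNorm_two_sq_eq_lintegral {ε : Type*} [ENorm ε] (f : α → ε) :
    eLpNorm f 2 μ ^ 2 = ∫⁻ x, ‖f x‖ₑ ^ 2 ∂μ := by
  simpa using eLpNorm_nnreal_pow_eq_lintegral (f := f) (μ := μ) (p := 2) two_ne_zero

theorem lintegral_mul_le_eLpNorm_two_mul {f g : α → ℝ≥0∞} (hf : AEMeasurable f μ)
    (hg : AEMeasurable g μ) :
    ∫⁻ x, f x * g x ∂μ ≤ eLpNorm f 2 μ * eLpNorm g 2 μ := by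
  simpa [eLpNorm_eq_lintegral_rpow_enorm_toReal two_ne_zero ENNReal.ofNat_ne_top] using
    ENNReal.lintegral_mul_le_Lp_mul_Lq μ Real.HolderConjugate.two_two hf hg

variable [SFinite μ] [SFinite ν]

/-- Minkowski's integral inequality for the exponent `2`: expand the square into an integral
over `ν.prod ν` and apply Cauchy–Schwarz in `x`. -/
theorem eLpNorm_two_lintegral_le {G : α → β → ℝ≥0∞} (hG : Measurable (Function.uncurry G)) :
    eLpNorm (fun x => ∫⁻ z, G x z ∂ν) 2 μ ≤ ∫⁻ z, eLpNorm (G · z) 2 μ ∂ν := by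
  have hGx (x : α) : Measurable (G x) := hG.comp measurable_prodMk_left
  have hGz (z : β) : Measurable (G · z) := hG.comp measurable_prodMk_right
  have hN : Measurable fun z => eLpNorm (G · z) 2 μ := by
    simp only [eLpNorm_eq_lintegral_rpow_enorm_toReal two_ne_zero ENNReal.ofNat_ne_top,
      enorm_eq_self]
    exact ((hG.pow_const _).lintegral_prod_left').pow_const _
  rw [← ENNReal.pow_le_pow_left_iff two_ne_zero]
  calc eLpNorm (fun x => ∫⁻ z, G x z ∂ν) 2 μ ^ 2
      = ∫⁻ x, ∫⁻ p, G x p.1 * G x p.2 ∂ν.prod ν ∂μ := by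
        rw [eLpNorm_two_sq_eq_lintegral]
        simp only [enorm_eq_self, sq,
          lintegral_prod_mul (hGx _).aemeasurable (hGx _).aemeasurable]
    _ = ∫⁻ p, ∫⁻ x, G x p.1 * G x p.2 ∂μ ∂ν.prod ν :=
        lintegral_lintegral_swap
          ((hG.comp (measurable_fst.prodMk (measurable_fst.comp measurable_snd))).mul
            (hG.comp (measurable_fst.prodMk (measurable_snd.comp measurable_snd)))).aemeasurable
    _ ≤ ∫⁻ p, eLpNorm (G · p.1) 2 μ * eLpNorm (G · p.2) 2 μ ∂ν.prod ν :=
        lintegral_mono fun p =>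
          lintegral_mul_le_eLpNorm_two_mul (hGz _).aemeasurable (hGz _).aemeasurable
    _ = (∫⁻ z, eLpNorm (G · z) 2 μ ∂ν) ^ 2 := by
        rw [lintegral_prod_mul hN.aemeasurable hN.aemeasurable, sq]

end Minkowski

section GaussianIntegral

variable {V : Type*} [NormedAddCommGroup V] [InnerProductSpace ℝ V] [FiniteDimensional ℝ V]
  [MeasurableSpace V] [BorelSpace V] {b : ℝ}

theorem integrable_rexp_neg_mul_sq_norm_add (hb : 0 < b) (c : ℝ) (w : V) :
    Integrable fun v : V => rexp (-b * ‖v‖ ^ 2 + c * ⟪w, v⟫) := by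
  convert (GaussianFourier.integrable_cexp_neg_mul_sq_norm_add (V := V) (b := b)
    (by simpa using hb) c w).norm using 2 with v
  rw [Complex.norm_exp]
  simp [← Complex.ofReal_pow]

theorem integral_rexp_neg_mul_sq_norm_add (hb : 0 < b) (c : ℝ) (w : V) :
    ∫ v : V, rexp (-b * ‖v‖ ^ 2 + c * ⟪w, v⟫) =
      (π / b) ^ (Module.finrank ℝ V / 2 : ℝ) * rexp (c ^ 2 * ‖w‖ ^ 2 / (4 * b)) := by
  rw [← Complex.ofReal_inj, ← integral_complex_ofReal]
  push_cast
  rw [GaussianFourier.integral_cexp_neg_mul_sq_norm_add (by simpa using hb),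
    Complex.ofReal_cpow (by positivity)]
  push_cast
  rfl

end GaussianIntegral

/-- The density of the normal law `𝒩(c, v • 1)`; note that `v` is a variance. -/
noncomputable def gaussianDensity (n : ℕ) (c : EuclideanSpace ℝ (Fin n)) (v : ℝ)
    (z : EuclideanSpace ℝ (Fin n)) : ℝ :=
  (2 * π * v) ^ (-(n : ℝ) / 2) * rexp (-‖z - c‖ ^ 2 / (2 * v))

namespace gaussianDensity

variable {n : ℕ} {c : EuclideanSpace ℝ (Fin n)} {v : ℝ}

theorem pos (hv : 0 < v) (z : EuclideanSpace ℝ (Fin n)) : 0 < gaussianDensity n c v z := by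
  unfold gaussianDensity
  positivity

theorem zero_one_eq_pow_mul {s : ℝ} (hs : 0 < s) (c y : EuclideanSpace ℝ (Fin n)) :
    gaussianDensity n 0 1 y = s ^ n * gaussianDensity n c (s ^ 2) (c + s • y) := by
  have hpow : (2 * π * s ^ 2) ^ (-(n : ℝ) / 2) = (2 * π) ^ (-(n : ℝ) / 2) * (s ^ n)⁻¹ := by
    rw [mul_rpow (by positivity) (by positivity), ← rpow_natCast s 2, ← rpow_mul hs.le,
      show (2 : ℕ) * (-(n : ℝ) / 2) = -n by push_cast; ring, rpow_neg hs.le, rpow_natCast]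
  have hexp : -‖c + s • y - c‖ ^ 2 / (2 * s ^ 2) = -‖y‖ ^ 2 / 2 := by
    rw [add_sub_cancel_left, norm_smul, norm_of_nonneg hs.le]
    field_simp
  simp only [gaussianDensity, hpow, hexp, mul_one, sub_zero]
  field_simp

theorem sq_mul_zero_one (a : ℝ) (hv : 0 < v) (x z : EuclideanSpace ℝ (Fin n)) :
    gaussianDensity n (a • x) v z ^ 2 * gaussianDensity n 0 1 x =
      ((2 * π * v) ^ (-(n : ℝ) / 2)) ^ 2 * (2 * π) ^ (-(n : ℝ) / 2) * rexp (-‖z‖ ^ 2 / v) *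
        rexp (-((v + 2 * a ^ 2) / (2 * v)) * ‖x‖ ^ 2 + 2 * a / v * ⟪z, x⟫) := by
  have hexp : -‖z - a • x‖ ^ 2 / (2 * v) * 2 + -‖x‖ ^ 2 / 2 =
      -‖z‖ ^ 2 / v + (-((v + 2 * a ^ 2) / (2 * v)) * ‖x‖ ^ 2 + 2 * a / v * ⟪z, x⟫) := by
    rw [norm_sub_sq_real, real_inner_smul_right, norm_smul, mul_pow, norm_eq_abs, sq_abs]
    field_simp
    ring
  simp only [gaussianDensity, mul_one, sub_zero, mul_pow, ← exp_nat_mul]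
  rw [mul_mul_mul_comm, ← exp_add, mul_assoc _ (rexp _), ← exp_add, ← hexp]
  push_cast
  ring_nf

end gaussianDensity

@[fun_prop]
theorem Continuous.gaussianDensity {X : Type*} [TopologicalSpace X] {n : ℕ} {v : ℝ}
    {c z : X → EuclideanSpace ℝ (Fin n)} (hc : Continuous c) (hz : Continuous z) :
    Continuous fun x => gaussianDensity n (c x) v (z x) := by
  unfold _root_.gaussianDensity
  fun_prop

section GaussianMeasure

variable {n : ℕ}

theorem gaussianMeasure_eq_withDensity :
    gaussianMeasure n = volume.withDensity fun x => ENNReal.ofReal (gaussianDensity n 0 1 x) := by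
  simp [gaussianMeasure, gaussianDensity]

instance : SFinite (gaussianMeasure n) := by
  rw [gaussianMeasure_eq_withDensity]
  infer_instance

theorem lintegral_gaussianMeasure {g : EuclideanSpace ℝ (Fin n) → ℝ≥0∞} (hg : Measurable g) :
    ∫⁻ x, g x ∂gaussianMeasure n = ∫⁻ x, ENNReal.ofReal (gaussianDensity n 0 1 x) * g x := by
  rw [gaussianMeasure_eq_withDensity, lintegral_withDensity_eq_lintegral_mul _ (by fun_prop) hg]
  rfl

theorem integral_gaussianMeasure (g : EuclideanSpace ℝ (Fin n) → ℝ) :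
    ∫ x, g x ∂gaussianMeasure n = ∫ x, gaussianDensity n 0 1 x * g x := by
  rw [gaussianMeasure_eq_withDensity, integral_withDensity_eq_integral_toReal_smul (by fun_prop)
    (Filter.Eventually.of_forall fun _ => ENNReal.ofReal_lt_top)]
  simp only [ENNReal.toReal_ofReal (gaussianDensity.pos one_pos _).le, smul_eq_mul]

theorem integral_gaussianMeasure_comp_add_smul (c : EuclideanSpace ℝ (Fin n)) {s : ℝ}
    (hs : 0 < s) (g : EuclideanSpace ℝ (Fin n) → ℝ) :
    ∫ y, g (c + s • y) ∂gaussianMeasure n = ∫ z, gaussianDensity n c (s ^ 2) z * g z := by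
  have hscale := Measure.integral_comp_smul volume
    (fun y => gaussianDensity n c (s ^ 2) (c + y) * g (c + y)) s
  rw [finrank_euclideanSpace_fin, abs_of_pos (by positivity),
    integral_add_left_eq_self (fun z => gaussianDensity n c (s ^ 2) z * g z) c] at hscale
  simp_rw [integral_gaussianMeasure, gaussianDensity.zero_one_eq_pow_mul hs c, mul_assoc,
    integral_const_mul, hscale, smul_eq_mul, ← mul_assoc, mul_inv_cancel₀ (pow_pos hs n).ne',
    one_mul]

end GaussianMeasure

section MehlerKernel

variable {n : ℕ}

theorem integrable_gaussianDensity_smul_sq_mul (a : ℝ) {v : ℝ} (hv : 0 < v)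
    (z : EuclideanSpace ℝ (Fin n)) :
    Integrable fun x => gaussianDensity n (a • x) v z ^ 2 * gaussianDensity n 0 1 x := by
  simp_rw [gaussianDensity.sq_mul_zero_one a hv]
  exact (integrable_rexp_neg_mul_sq_norm_add (by positivity) _ z).const_mul _

theorem integral_gaussianDensity_smul_sq_mul (a : ℝ) {v : ℝ} (hv : 0 < v)
    (z : EuclideanSpace ℝ (Fin n)) :
    ∫ x, gaussianDensity n (a • x) v z ^ 2 * gaussianDensity n 0 1 x =
      ((2 * π) ^ (-(n : ℝ) / 2) * (v * (v + 2 * a ^ 2)) ^ (-(n : ℝ) / 4) *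
        rexp (-‖z‖ ^ 2 / (2 * (v + 2 * a ^ 2)))) ^ 2 := by
  have hP : 0 < 2 * π := by positivity
  have hQ : 0 < v + 2 * a ^ 2 := by positivity
  have hconst : ((2 * π * v) ^ (-(n : ℝ) / 2)) ^ 2 * (2 * π) ^ (-(n : ℝ) / 2) *
      (π / ((v + 2 * a ^ 2) / (2 * v))) ^ ((n : ℝ) / 2) =
      ((2 * π) ^ (-(n : ℝ) / 2) * (v * (v + 2 * a ^ 2)) ^ (-(n : ℝ) / 4)) ^ 2 := by
    have hsq (x : ℝ) (hx : 0 < x) : (x ^ ((n : ℝ) / 4)) ^ 2 = x ^ ((n : ℝ) / 2) := by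
      rw [← rpow_natCast, ← rpow_mul hx.le]
      ring_nf
    rw [show π / ((v + 2 * a ^ 2) / (2 * v)) = 2 * π * v / (v + 2 * a ^ 2) by field_simp]
    simp only [neg_div, rpow_neg hP.le, rpow_neg (mul_pos hP hv).le,
      rpow_neg (mul_pos hv hQ).le, div_rpow (mul_pos hP hv).le hQ.le, mul_rpow hP.le hv.le,
      mul_rpow hv.le hQ.le, mul_pow, inv_pow, hsq v hv, hsq _ hQ]
    have : 0 < (2 * π) ^ ((n : ℝ) / 2) := by positivity
    have : 0 < v ^ ((n : ℝ) / 2) := by positivity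
    have : 0 < (v + 2 * a ^ 2) ^ ((n : ℝ) / 2) := by positivity
    field_simp
  have hexp : rexp (-‖z‖ ^ 2 / v) *
      rexp ((2 * a / v) ^ 2 * ‖z‖ ^ 2 / (4 * ((v + 2 * a ^ 2) / (2 * v)))) =
      rexp (-‖z‖ ^ 2 / (2 * (v + 2 * a ^ 2))) ^ 2 := by
    rw [← exp_add, ← exp_nat_mul]
    congr 1
    field_simp
    ring
  simp_rw [gaussianDensity.sq_mul_zero_one a hv, integral_const_mul]
  rw [integral_rexp_neg_mul_sq_norm_add (by positivity), finrank_euclideanSpace_fin]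
  calc _ = ((2 * π * v) ^ (-(n : ℝ) / 2)) ^ 2 * (2 * π) ^ (-(n : ℝ) / 2) *
        (π / ((v + 2 * a ^ 2) / (2 * v))) ^ ((n : ℝ) / 2) * (rexp (-‖z‖ ^ 2 / v) *
          rexp ((2 * a / v) ^ 2 * ‖z‖ ^ 2 / (4 * ((v + 2 * a ^ 2) / (2 * v))))) := by ring
    _ = _ := by rw [hconst, hexp]; ring

theorem eLpNorm_gaussianDensity_smul (a : ℝ) {v : ℝ} (hv : 0 < v)
    (z : EuclideanSpace ℝ (Fin n)) :
    eLpNorm (fun x => gaussianDensity n (a • x) v z) 2 (gaussianMeasure n) =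
      ENNReal.ofReal ((2 * π) ^ (-(n : ℝ) / 2) * (v * (v + 2 * a ^ 2)) ^ (-(n : ℝ) / 4) *
        rexp (-‖z‖ ^ 2 / (2 * (v + 2 * a ^ 2)))) := by
  have hW : 0 ≤ (2 * π) ^ (-(n : ℝ) / 2) * (v * (v + 2 * a ^ 2)) ^ (-(n : ℝ) / 4) *
      rexp (-‖z‖ ^ 2 / (2 * (v + 2 * a ^ 2))) := by positivity
  have hK (x : EuclideanSpace ℝ (Fin n)) : 0 < gaussianDensity n (a • x) v z :=
    gaussianDensity.pos hv z
  have hcont : Continuous fun x => gaussianDensity n (a • x) v z := by fun_prop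
  refine (ENNReal.pow_right_strictMono two_ne_zero).injective ?_
  rw [eLpNorm_two_sq_eq_lintegral, ← ENNReal.ofReal_pow hW,
    ← integral_gaussianDensity_smul_sq_mul a hv z,
    ofReal_integral_eq_lintegral_ofReal (integrable_gaussianDensity_smul_sq_mul a hv z)
      (Filter.Eventually.of_forall fun x =>
        mul_nonneg (sq_nonneg _) (gaussianDensity.pos one_pos x).le),
    lintegral_gaussianMeasure (hcont.measurable.enorm.pow_const 2)]
  refine lintegral_congr fun x => ?_
  rw [enorm_of_nonneg (hK x).le, ← ENNReal.ofReal_pow (hK x).le,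
    ← ENNReal.ofReal_mul (gaussianDensity.pos one_pos x).le, mul_comm]

theorem OU_eq_integral_mul_gaussianDensity {t : ℝ} (ht : 0 < t)
    (f : EuclideanSpace ℝ (Fin n) → ℝ) (x : EuclideanSpace ℝ (Fin n)) :
    OU n t f x = ∫ z, f z * gaussianDensity n (rexp (-t) • x) (1 - rexp (-2 * t)) z := by
  have hv : 0 < 1 - rexp (-2 * t) := sub_pos.2 (exp_lt_one_iff.2 (by linarith))
  simp_rw [OU, integral_gaussianMeasure_comp_add_smul _ (sqrt_pos.2 hv), sq_sqrt hv.le, mul_comm]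

end MehlerKernel

section Vweight

variable {n : ℕ}

@[fun_prop]
theorem continuous_Vweight (t : ℝ) : Continuous (Vweight n t) := by
  unfold Vweight
  fun_prop

theorem Vweight_nonneg {t : ℝ} (ht : 0 ≤ t) (z : EuclideanSpace ℝ (Fin n)) :
    0 ≤ Vweight n t z :=
  mul_nonneg (rpow_nonneg (sub_nonneg.2 (exp_le_one_iff.2 (by linarith))) _) (exp_nonneg _)

theorem Vweight_mul_gaussianDensity (t : ℝ) (z : EuclideanSpace ℝ (Fin n)) :
    Vweight n t z * gaussianDensity n 0 1 z =
      (2 * π) ^ (-(n : ℝ) / 2) *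
        ((1 - rexp (-2 * t)) * (1 - rexp (-2 * t) + 2 * rexp (-t) ^ 2)) ^ (-(n : ℝ) / 4) *
          rexp (-‖z‖ ^ 2 / (2 * (1 - rexp (-2 * t) + 2 * rexp (-t) ^ 2))) := by
  have hsq : rexp (-t) ^ 2 = rexp (-2 * t) := by rw [← exp_nat_mul]; ring_nf
  have h4 : rexp (-4 * t) = rexp (-2 * t) ^ 2 := by rw [← exp_nat_mul]; ring_nf
  have h2 : rexp (2 * t) = (rexp (-2 * t))⁻¹ := by rw [← exp_neg]; ring_nf
  have hbase : 1 - rexp (-4 * t) =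
      (1 - rexp (-2 * t)) * (1 - rexp (-2 * t) + 2 * rexp (-t) ^ 2) := by
    rw [h4, hsq]
    ring
  have hexp : ‖z‖ ^ 2 / (2 * (1 + rexp (2 * t))) + -‖z‖ ^ 2 / 2 =
      -‖z‖ ^ 2 / (2 * (1 - rexp (-2 * t) + 2 * rexp (-t) ^ 2)) := by
    have hu : 0 < rexp (-2 * t) := exp_pos _
    rw [h2, hsq, show 1 - rexp (-2 * t) + 2 * rexp (-2 * t) = 1 + rexp (-2 * t) by ring]
    generalize rexp (-2 * t) = u at hu ⊢
    have : 0 < 1 + u := by positivity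
    field_simp
    ring
  rw [Vweight, gaussianDensity, hbase, ← hexp, exp_add]
  simp only [mul_one, sub_zero]
  ring

end Vweight

theorem OU_L2_weighted_L1_bound_general (n : ℕ) (t : ℝ) (ht : 0 < t)
    (f : EuclideanSpace ℝ (Fin n) → ℝ) (hf : Measurable f)
    (hint : Integrable (fun y => |f y| * Vweight n t y) (gaussianMeasure n)) :
    eLpNorm (OU n t f) 2 (gaussianMeasure n) ≤
      ENNReal.ofReal (∫ y, |f y| * Vweight n t y ∂(gaussianMeasure n)) := by
  set K : EuclideanSpace ℝ (Fin n) → EuclideanSpace ℝ (Fin n) → ℝ :=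
    fun x z => gaussianDensity n (rexp (-t) • x) (1 - rexp (-2 * t)) z
  have hv : 0 < 1 - rexp (-2 * t) := sub_pos.2 (exp_lt_one_iff.2 (by linarith))
  have hG : Measurable (Function.uncurry fun x z => ‖f z * K x z‖ₑ) :=
    ((hf.comp measurable_snd).mul (by fun_prop : Continuous (Function.uncurry K)).measurable).enorm
  calc eLpNorm (OU n t f) 2 (gaussianMeasure n)
      ≤ eLpNorm (fun x => ∫⁻ z, ‖f z * K x z‖ₑ) 2 (gaussianMeasure n) :=
        eLpNorm_mono_enorm fun x => by
          rw [OU_eq_integral_mul_gaussianDensity ht, enorm_eq_self]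
          exact enorm_integral_le_lintegral_enorm _
    _ ≤ ∫⁻ z, eLpNorm (fun x => ‖f z * K x z‖ₑ) 2 (gaussianMeasure n) :=
        eLpNorm_two_lintegral_le hG
    _ = ∫⁻ z, ‖f z‖ₑ * ENNReal.ofReal (Vweight n t z * gaussianDensity n 0 1 z) := by
        refine lintegral_congr fun z => ?_
        rw [eLpNorm_enorm, Vweight_mul_gaussianDensity, ← eLpNorm_gaussianDensity_smul _ hv]
        exact eLpNorm_const_smul (f z) (K · z) 2 _
    _ = ∫⁻ z, ENNReal.ofReal (|f z| * Vweight n t z) ∂gaussianMeasure n := by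
        rw [lintegral_gaussianMeasure (by fun_prop)]
        refine lintegral_congr fun z => ?_
        rw [Real.enorm_eq_ofReal_abs, ← ENNReal.ofReal_mul (abs_nonneg _),
          ← ENNReal.ofReal_mul (gaussianDensity.pos one_pos z).le]
        ring_nf
    _ = ENNReal.ofReal (∫ y, |f y| * Vweight n t y ∂(gaussianMeasure n)) :=
        (ofReal_integral_eq_lintegral_ofReal hint (Filter.Eventually.of_forall fun z =>
          mul_nonneg (abs_nonneg _) (Vweight_nonneg ht.le z))).symm

theorem OU_L2_weighted_L1_bound (n : ℕ) (hn : 1 ≤ n) (t : ℝ) (ht : 0 < t)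
    (f : EuclideanSpace ℝ (Fin n) → ℝ) (hf : Measurable f)
    (hint : Integrable (fun y => |f y| * Vweight n t y) (gaussianMeasure n)) :
    eLpNorm (OU n t f) 2 (gaussianMeasure n) ≤
      ENNReal.ofReal (∫ y, |f y| * Vweight n t y ∂(gaussianMeasure n)) :=
  OU_L2_weighted_L1_bound_general n t ht f hf hint
end

section
/- Let (E, μ) be a σ-finite measure space, let k : E × E → [0,∞) be measurable and symmetric (k(x,y) = k(y,x)) with ∫ k(x,y) dμ(y) = 1 for μ-almost every x, and let V : E → (0,∞) be measurable. Define Kf(x) = ∫ k(x,y) f(y) dμ(y). Assume that ‖Kf‖_{L²(μ)} ≤ ∫ |f| V dμ for every measurable f with ∫ |f| V dμ < ∞. Then the kernel of K∘K, namely k₂(x,y) = ∫ k(x,z) k(z,y) dμ(z), satisfies k₂(x,y) ≤ V(x) V(y) for μ⊗μ-almost every (x,y). -/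
open MeasureTheory Set
open scoped ENNReal symmDiff

/-! Write `κ` for the kernel of `K ∘ K` and `ν = V • μ`. By symmetry of `k` and Tonelli,
`∫_{A×B} κ d(μ⊗μ) = ⟪K 1_A, K 1_B⟫_{L²(μ)} ≤ ‖K 1_A‖₂ ‖K 1_B‖₂ ≤ ν A * ν B`, so the measure
`κ • (μ⊗μ)` is dominated by `ν ⊗ ν = (V ⊗ V) • (μ⊗μ)` on measurable rectangles. These form a
generating semiring, so the domination holds on all measurable sets, and comparing densities
gives `κ ≤ V ⊗ V` almost everywhere. -/

namespace MeasureTheory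

variable {α β : Type*} [MeasurableSpace α] [MeasurableSpace β]

lemma isSetSemiring_prod :
    IsSetSemiring
      (image2 (· ×ˢ ·) {s : Set α | MeasurableSet s} {t : Set β | MeasurableSet t}) where
  empty_mem := ⟨∅, .empty, ∅, .empty, empty_prod⟩
  inter_mem := by
    rintro _ ⟨s, hs, t, ht, rfl⟩ _ ⟨s', hs', t', ht', rfl⟩
    exact ⟨s ∩ s', hs.inter hs', t ∩ t', ht.inter ht', (prod_inter_prod).symm⟩
  sdiff_eq_sUnion' := by
    classical
    rintro _ ⟨s, hs, t, ht, rfl⟩ _ ⟨s', hs', t', ht', rfl⟩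
    refine ⟨{(s \ s') ×ˢ t, (s ∩ s') ×ˢ (t \ t')}, ?_, ?_, ?_⟩
    · simp only [Finset.coe_insert, Finset.coe_singleton, insert_subset_iff,
        singleton_subset_iff]
      exact ⟨mem_image2_of_mem (hs.diff hs') ht,
        mem_image2_of_mem (hs.inter hs') (ht.diff ht')⟩
    · simp only [Finset.coe_insert, Finset.coe_singleton]
      refine PairwiseDisjoint.insert (pairwiseDisjoint_singleton _ _) fun _ hu _ => ?_
      rw [mem_singleton_iff.1 hu]
      exact disjoint_prod.2 (Or.inl (disjoint_sdiff_left.mono_right inter_subset_right))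
    · ext ⟨x, y⟩
      simp only [Finset.coe_insert, Finset.coe_singleton, sUnion_insert, sUnion_singleton,
        mem_sdiff, mem_prod, mem_union, mem_inter_iff]
      tauto

namespace Measure

lemma le_of_forall_le_of_isSetSemiring {ν₁ ν₂ : Measure α} [IsFiniteMeasure ν₁]
    [IsFiniteMeasure ν₂] {C : Set (Set α)} (hC : IsSetSemiring C)
    (hgen : ‹MeasurableSpace α› = MeasurableSpace.generateFrom C) (huniv : univ ∈ C)
    (h : ∀ s ∈ C, ν₁ s ≤ ν₂ s) : ν₁ ≤ ν₂ := by
  have h_sup : ∀ s ∈ supClosure C, ν₁ s ≤ ν₂ s := by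
    intro s hs
    obtain ⟨P, hP⟩ := hC.mem_supClosure_iff.1 hs
    have hPmeas : ∀ p ∈ (P.parts : Set (Set α)), MeasurableSet p := fun p hp => by
      rw [hgen]; exact MeasurableSpace.measurableSet_generateFrom (hP hp)
    rw [← P.sup_parts, Finset.sup_id_set_eq_sUnion,
      measure_sUnion P.parts.countable_toSet P.disjoint hPmeas,
      measure_sUnion P.parts.countable_toSet P.disjoint hPmeas]
    exact ENNReal.tsum_le_tsum fun p => h p (hP p.2)
  -- Approximate `s` in `ν₁ + ν₂`-measure by a finite disjoint union of sets of `C`.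
  refine le_iff.2 fun s hs => ENNReal.le_of_forall_pos_le_add fun ε hε _ => ?_
  obtain ⟨t, htC, hts⟩ := exists_measure_symmDiff_lt_of_generateFrom_isSetSemiring
    (μ := ν₁ + ν₂) hC ⟨{univ}, countable_singleton _, singleton_subset_iff.2 huniv, by simp⟩
    hgen hs (ENNReal.half_pos (ENNReal.coe_ne_zero.2 hε.ne'))
  have h₁ : ν₁ (t ∆ s) ≤ ε / 2 :=
    (le_add_right le_rfl).trans (le_of_lt (by simpa using hts))
  have h₂ : ν₂ (t ∆ s) ≤ ε / 2 :=
    (le_add_left le_rfl).trans (le_of_lt (by simpa using hts))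
  calc ν₁ s ≤ ν₁ t + ν₁ (t ∆ s) := by
        rw [symmDiff_comm]; exact tsub_le_iff_left.1 le_measure_symmDiff
    _ ≤ ν₂ t + ε / 2 := add_le_add (h_sup t htC) h₁
    _ ≤ ν₂ s + ν₂ (t ∆ s) + ε / 2 := by
        gcongr; exact tsub_le_iff_left.1 le_measure_symmDiff
    _ ≤ ν₂ s + ε := by
        rw [add_assoc]
        gcongr
        exact (add_le_add_left h₂ _).trans (ENNReal.add_halves _).le

lemma le_of_forall_prod_le {ν₁ ν₂ : Measure (α × β)} [IsFiniteMeasure ν₁]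
    [IsFiniteMeasure ν₂]
    (h : ∀ s t, MeasurableSet s → MeasurableSet t → ν₁ (s ×ˢ t) ≤ ν₂ (s ×ˢ t)) : ν₁ ≤ ν₂ :=
  le_of_forall_le_of_isSetSemiring isSetSemiring_prod generateFrom_prod.symm
    ⟨univ, .univ, univ, .univ, univ_prod_univ⟩
    (forall_mem_image2.2 fun _ hs _ ht => h _ _ hs ht)

lemma le_prod_of_forall_prod_le {ρ : Measure α} {ρ' : Measure β} [SigmaFinite ρ]
    [SigmaFinite ρ'] {ν : Measure (α × β)}
    (h : ∀ s t, MeasurableSet s → MeasurableSet t → ρ s < ∞ → ρ' t < ∞ →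
      ν (s ×ˢ t) ≤ ρ s * ρ' t) :
    ν ≤ ρ.prod ρ' := by
  set R : ℕ → Set (α × β) := fun n => spanningSets ρ n ×ˢ spanningSets ρ' n
  have hR_le (n : ℕ) : ν.restrict (R n) ≤ (ρ.restrict (spanningSets ρ n)).prod
      (ρ'.restrict (spanningSets ρ' n)) := by
    have := isFiniteMeasure_restrict.2 (measure_spanningSets_lt_top ρ n).ne
    have := isFiniteMeasure_restrict.2 (measure_spanningSets_lt_top ρ' n).ne
    have : IsFiniteMeasure (ν.restrict (R n)) := isFiniteMeasure_restrict.2 <|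
      ne_top_of_le_ne_top (ENNReal.mul_ne_top (measure_spanningSets_lt_top ρ n).ne
        (measure_spanningSets_lt_top ρ' n).ne)
        (h _ _ (measurableSet_spanningSets ρ n) (measurableSet_spanningSets ρ' n)
          (measure_spanningSets_lt_top ρ n) (measure_spanningSets_lt_top ρ' n))
    refine le_of_forall_prod_le fun s t hs ht => ?_
    rw [restrict_apply (hs.prod ht), prod_inter_prod, prod_prod, restrict_apply hs,
      restrict_apply ht]
    exact h _ _ (hs.inter (measurableSet_spanningSets ρ n))
      (ht.inter (measurableSet_spanningSets ρ' n))
      (measure_inter_lt_top_of_right_ne_top (measure_spanningSets_lt_top ρ n).ne)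
      (measure_inter_lt_top_of_right_ne_top (measure_spanningSets_lt_top ρ' n).ne)
  refine le_iff.2 fun s hs => ?_
  have hmono : Monotone fun n => s ∩ R n := fun m n hmn =>
    inter_subset_inter_right _ (Set.prod_mono (monotone_spanningSets ρ hmn)
      (monotone_spanningSets ρ' hmn))
  have hcover : ⋃ n, s ∩ R n = s := by
    rw [← inter_iUnion, iUnion_prod_of_monotone (monotone_spanningSets ρ)
      (monotone_spanningSets ρ'), iUnion_spanningSets, iUnion_spanningSets, univ_prod_univ,
      inter_univ]
  rw [← hcover, hmono.measure_iUnion]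
  refine iSup_le fun n => ?_
  calc ν (s ∩ R n) = ν.restrict (R n) s := (restrict_apply hs).symm
    _ ≤ _ := hR_le n s
    _ = ρ.prod ρ' (s ∩ R n) := by rw [prod_restrict, restrict_apply hs]
    _ ≤ ρ.prod ρ' (⋃ n, s ∩ R n) := measure_mono (subset_iUnion (fun n => s ∩ R n) n)

lemma ae_le_of_withDensity_le {μ : Measure α} [SigmaFinite μ] {f g : α → ℝ≥0∞}
    (hf : Measurable f) (h : μ.withDensity f ≤ μ.withDensity g) : f ≤ᵐ[μ] g :=
  ae_le_of_forall_setLIntegral_le_of_sigmaFinite hf fun s hs _ => by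
    simpa only [withDensity_apply _ hs] using h s

end Measure
end MeasureTheory

section KernelSquare

variable {E : Type*} [MeasurableSpace E] {μ : Measure E}

lemma lintegral_ofReal_eq_one_of_integral_eq_one {f : E → ℝ} (hf_nonneg : 0 ≤ᵐ[μ] f)
    (hf : AEStronglyMeasurable f μ) (h : ∫ x, f x ∂μ = 1) :
    ∫⁻ x, ENNReal.ofReal (f x) ∂μ = 1 := by
  rwa [integral_eq_lintegral_of_nonneg_ae hf_nonneg hf, ENNReal.toReal_eq_one_iff] at h

lemma measurable_lintegral_mul_comp [SFinite μ] {l : E → E → ℝ≥0∞}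
    (hl : Measurable (Function.uncurry l)) :
    Measurable fun p : E × E => ∫⁻ z, l p.1 z * l z p.2 ∂μ :=
  ((hl.comp ((measurable_fst.comp measurable_fst).prodMk measurable_snd)).mul
    (hl.comp (measurable_snd.prodMk (measurable_snd.comp measurable_fst)))).lintegral_prod_right'

lemma setLIntegral_prod_lintegral_mul_eq [SFinite μ] {l : E → E → ℝ≥0∞}
    (hl : Measurable (Function.uncurry l)) (hl_symm : ∀ x y, l x y = l y x) (A B : Set E) :
    ∫⁻ p in A ×ˢ B, ∫⁻ z, l p.1 z * l z p.2 ∂μ ∂μ.prod μ =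
      ∫⁻ z, (∫⁻ x in A, l z x ∂μ) * ∫⁻ y in B, l z y ∂μ ∂μ := by
  have hl_left (x : E) : Measurable (l x) := hl.comp measurable_prodMk_left
  have hl_right (y : E) : Measurable fun x => l x y := hl.comp measurable_prodMk_right
  have hl_swap : Measurable fun q : E × E => l q.2 q.1 := hl.comp measurable_swap
  have hlB : Measurable fun z => ∫⁻ y in B, l z y ∂μ := hl.lintegral_prod_right'
  rw [← Measure.prod_restrict, lintegral_prod _ (measurable_lintegral_mul_comp hl).aemeasurable]
  calc ∫⁻ x in A, ∫⁻ y in B, ∫⁻ z, l x z * l z y ∂μ ∂μ ∂μ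
      = ∫⁻ x in A, ∫⁻ z, l x z * ∫⁻ y in B, l z y ∂μ ∂μ ∂μ := by
        refine lintegral_congr fun x => ?_
        rw [lintegral_lintegral_swap
          ((hl_left x).comp measurable_snd |>.mul hl_swap).aemeasurable]
        exact lintegral_congr fun z => lintegral_const_mul _ (hl_left z)
    _ = ∫⁻ z, ∫⁻ x in A, l x z * ∫⁻ y in B, l z y ∂μ ∂μ ∂μ :=
        lintegral_lintegral_swap (hl.mul (hlB.comp measurable_snd)).aemeasurable
    _ = ∫⁻ z, (∫⁻ x in A, l z x ∂μ) * ∫⁻ y in B, l z y ∂μ ∂μ := by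
        refine lintegral_congr fun z => ?_
        rw [lintegral_mul_const _ (hl_right z)]
        simp only [hl_symm _ z]

lemma lintegral_setLIntegral_rpow_two_le {k : E → E → ℝ}
    (hk_meas : Measurable (Function.uncurry k)) (hk_nonneg : ∀ x y, 0 ≤ k x y)
    (hk_markov : ∀ᵐ x ∂μ, ∫ y, k x y ∂μ = 1)
    {V : E → ℝ} (hV_meas : Measurable V) (hV_nonneg : ∀ x, 0 ≤ V x)
    (hK : ∀ f : E → ℝ, Measurable f → Integrable (fun x => |f x| * V x) μ →
      eLpNorm (fun x => ∫ y, k x y * f y ∂μ) 2 μ ≤ ENNReal.ofReal (∫ x, |f x| * V x ∂μ))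
    {A : Set E} (hA : MeasurableSet A)
    (hVA : μ.withDensity (fun x => ENNReal.ofReal (V x)) A < ∞) :
    (∫⁻ z, (∫⁻ x in A, ENNReal.ofReal (k z x) ∂μ) ^ (2 : ℝ) ∂μ) ^ (1 / 2 : ℝ) ≤
      μ.withDensity (fun x => ENNReal.ofReal (V x)) A := by
  have hweight : (fun x => |A.indicator 1 x| * V x) = A.indicator V := by
    ext x; by_cases hx : x ∈ A <;> simp [hx]
  have hV_int : IntegrableOn V A μ := by
    refine ⟨hV_meas.aestronglyMeasurable, (hasFiniteIntegral_iff_ofReal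
      (ae_of_all _ hV_nonneg)).2 ?_⟩
    rwa [← withDensity_apply _ hA]
  have hKA := hK (A.indicator 1) (measurable_one.indicator hA)
    (by rw [hweight]; exact (integrable_indicator_iff hA).2 hV_int)
  rw [hweight, integral_indicator hA, ofReal_integral_eq_lintegral_ofReal hV_int
    (ae_of_all _ hV_nonneg), ← withDensity_apply _ hA,
    eLpNorm_eq_lintegral_rpow_enorm_toReal two_ne_zero ENNReal.ofNat_ne_top] at hKA
  refine le_of_eq_of_le ?_ hKA
  congr 1
  refine lintegral_congr_ae ?_
  filter_upwards [hk_markov] with z hz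
  have hkz : Measurable (k z) := hk_meas.comp measurable_prodMk_left
  have h_ne_top : ∫⁻ x in A, ENNReal.ofReal (k z x) ∂μ ≠ ∞ := by
    refine ne_top_of_le_ne_top ENNReal.one_ne_top ?_
    rw [← lintegral_ofReal_eq_one_of_integral_eq_one (ae_of_all _ (hk_nonneg z))
      hkz.aestronglyMeasurable hz]
    exact setLIntegral_le_lintegral A _
  have h_indicator : (fun y => k z y * A.indicator 1 y) = A.indicator (k z) := by
    ext y; by_cases hy : y ∈ A <;> simp [hy]
  rw [h_indicator, integral_indicator hA, integral_eq_lintegral_of_nonneg_ae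
    (ae_of_all _ (hk_nonneg z)) hkz.aestronglyMeasurable, Real.enorm_of_nonneg
    ENNReal.toReal_nonneg, ENNReal.ofReal_toReal h_ne_top]
  norm_num

end KernelSquare

theorem kernel_square_bound_of_weighted_L1_L2
    {E : Type*} [MeasurableSpace E] (μ : Measure E) [SigmaFinite μ]
    (k : E → E → ℝ) (hk_meas : Measurable (Function.uncurry k))
    (hk_nonneg : ∀ x y, 0 ≤ k x y)
    (hk_symm : ∀ x y, k x y = k y x)
    (hk_markov : ∀ᵐ x ∂μ, ∫ y, k x y ∂μ = 1)
    (V : E → ℝ) (hV_meas : Measurable V) (hV_pos : ∀ x, 0 < V x)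
    (hK : ∀ f : E → ℝ, Measurable f → Integrable (fun x => |f x| * V x) μ →
      eLpNorm (fun x => ∫ y, k x y * f y ∂μ) 2 μ ≤
        ENNReal.ofReal (∫ x, |f x| * V x ∂μ)) :
    ∀ᵐ p ∂(μ.prod μ), ∫ z, k p.1 z * k z p.2 ∂μ ≤ V p.1 * V p.2 := by
  set l : E → E → ℝ≥0∞ := fun x y => ENNReal.ofReal (k x y)
  have hl : Measurable (Function.uncurry l) := ENNReal.measurable_ofReal.comp hk_meas
  set κ : E × E → ℝ≥0∞ := fun p => ∫⁻ z, l p.1 z * l z p.2 ∂μ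
  have hκ : Measurable κ := measurable_lintegral_mul_comp hl
  have hV : Measurable fun x => ENNReal.ofReal (V x) := ENNReal.measurable_ofReal.comp hV_meas
  have hV_nonneg (x : E) : 0 ≤ V x := (hV_pos x).le
  have hle : (μ.prod μ).withDensity κ ≤
      (μ.withDensity fun x => ENNReal.ofReal (V x)).prod
        (μ.withDensity fun x => ENNReal.ofReal (V x)) := by
    refine Measure.le_prod_of_forall_prod_le fun A B hA hB hVA hVB => ?_
    rw [withDensity_apply _ (hA.prod hB),
      setLIntegral_prod_lintegral_mul_eq hl (fun x y => by simp only [l, hk_symm x y]) A B]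
    have hLA := lintegral_setLIntegral_rpow_two_le hk_meas hk_nonneg hk_markov hV_meas
      hV_nonneg hK hA hVA
    have hLB := lintegral_setLIntegral_rpow_two_le hk_meas hk_nonneg hk_markov hV_meas
      hV_nonneg hK hB hVB
    exact (ENNReal.lintegral_mul_le_Lp_mul_Lq μ .two_two hl.lintegral_prod_right'.aemeasurable
      hl.lintegral_prod_right'.aemeasurable).trans (mul_le_mul' hLA hLB)
  rw [prod_withDensity hV hV] at hle
  filter_upwards [Measure.ae_le_of_withDensity_le hκ hle] with p hp
  have hκ_eq : ∫ z, k p.1 z * k z p.2 ∂μ = (κ p).toReal := by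
    rw [integral_eq_lintegral_of_nonneg_ae (ae_of_all _ fun z => mul_nonneg (hk_nonneg _ _)
      (hk_nonneg _ _)) ((hk_meas.comp measurable_prodMk_left).mul
        (hk_meas.comp measurable_prodMk_right)).aestronglyMeasurable]
    simp only [κ, l, ENNReal.ofReal_mul (hk_nonneg _ _)]
  rw [hκ_eq, ← ENNReal.toReal_ofReal (mul_nonneg (hV_nonneg p.1) (hV_nonneg p.2)),
    ENNReal.ofReal_mul (hV_nonneg p.1)]
  exact ENNReal.toReal_mono (by finiteness) hp
end
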